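/- For a finite nonempty type Y, the log-sum-exp function LSE(l) = log(∑_y exp(l(y))) on functions l : Y → ℝ is convex, and it is strictly convex along any direction that is not constant: if l₁, l₂ : Y → ℝ are such that l₁ − l₂ is a non-constant function and t ∈ (0,1), then LSE(t·l₁ + (1−t)·l₂) < t·LSE(l₁) + (1−t)·LSE(l₂). -/
import Mathlib

open Real Finset

private lemma strict_amgm' {x y t : ℝ} (hx : 0 < x) (hy : 0 < y) (hne : x ≠ y)
    (ht0 : 0 < t) (ht1 : t < 1) : x ^ t * y ^ (1 - t) < t * x + (1 - t) * y := by
  have hlog := strictConcaveOn_log_Ioi.2 (Set.mem_Ioi.2 hx) (Set.mem_Ioi.2 hy) hne ht0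
    (by linarith : (0:ℝ) < 1 - t) (by ring)
  have h1 : x ^ t * y ^ (1 - t) = Real.exp (t * Real.log x + (1 - t) * Real.log y) := by
    rw [Real.rpow_def_of_pos hx, Real.rpow_def_of_pos hy, ← Real.exp_add]; ring_nf
  have h2 : 0 < t * x + (1 - t) * y :=
    add_pos (mul_pos ht0 hx) (mul_pos (by linarith) hy)
  calc x ^ t * y ^ (1 - t) = Real.exp (t * Real.log x + (1 - t) * Real.log y) := h1
    _ < Real.exp (Real.log (t * x + (1 - t) * y)) := by
        apply Real.exp_lt_exp.2; simpa [smul_eq_mul] using hlog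
    _ = t * x + (1 - t) * y := Real.exp_log h2

private lemma amgm' {x y t : ℝ} (hx : 0 ≤ x) (hy : 0 ≤ y)
    (ht0 : 0 ≤ t) (ht1 : t ≤ 1) : x ^ t * y ^ (1 - t) ≤ t * x + (1 - t) * y :=
  Real.geom_mean_le_arith_mean2_weighted ht0 (by linarith) hx hy (by ring)

private lemma lse_pointwise {A B p q t : ℝ} (hA : 0 < A) (hB : 0 < B)
    (hp : 0 < p) (hq : 0 < q) (ht0 : 0 ≤ t) (ht1 : t ≤ 1) :
    p ^ t * q ^ (1 - t) ≤ A ^ t * B ^ (1 - t) * (t * (p / A) + (1 - t) * (q / B)) := by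
  have h := amgm' (le_of_lt (div_pos hp hA)) (le_of_lt (div_pos hq hB)) ht0 ht1
  have key : p ^ t * q ^ (1 - t) = A ^ t * B ^ (1 - t) * ((p / A) ^ t * (q / B) ^ (1 - t)) := by
    rw [Real.div_rpow hp.le hA.le, Real.div_rpow hq.le hB.le]
    field_simp
  rw [key]
  exact mul_le_mul_of_nonneg_left h (by positivity)

private lemma lse_pointwise_strict {A B p q t : ℝ} (hA : 0 < A) (hB : 0 < B)
    (hp : 0 < p) (hq : 0 < q) (ht0 : 0 < t) (ht1 : t < 1) (hne : p / A ≠ q / B) :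
    p ^ t * q ^ (1 - t) < A ^ t * B ^ (1 - t) * (t * (p / A) + (1 - t) * (q / B)) := by
  have h := strict_amgm' (div_pos hp hA) (div_pos hq hB) hne ht0 ht1
  have key : p ^ t * q ^ (1 - t) = A ^ t * B ^ (1 - t) * ((p / A) ^ t * (q / B) ^ (1 - t)) := by
    rw [Real.div_rpow hp.le hA.le, Real.div_rpow hq.le hB.le]
    field_simp
  rw [key]
  exact mul_lt_mul_of_pos_left h (by positivity)

/-- Log-sum-exp is convex, and strictly convex along non-constant directions:
if `l₁ − l₂` is non-constant and `t ∈ (0,1)`, then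
`LSE (t l₁ + (1−t) l₂) < t LSE l₁ + (1−t) LSE l₂`. -/
theorem lse_convex_strict_along_nonconstant {Y : Type*} [Fintype Y] [Nonempty Y]
    (LSE : (Y → ℝ) → ℝ)
    (hLSE : ∀ l : Y → ℝ, LSE l = Real.log (∑ y, Real.exp (l y))) :
    ConvexOn ℝ Set.univ LSE ∧
    ∀ l₁ l₂ : Y → ℝ, (¬ ∃ c : ℝ, ∀ y, l₁ y - l₂ y = c) →
      ∀ t : ℝ, t ∈ Set.Ioo (0 : ℝ) 1 →
        LSE (t • l₁ + (1 - t) • l₂) < t * LSE l₁ + (1 - t) * LSE l₂ := by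
  have hSpos : ∀ l : Y → ℝ, 0 < ∑ y, Real.exp (l y) := fun l =>
    Finset.sum_pos (fun y _ => Real.exp_pos _) Finset.univ_nonempty
  -- weighted sum identity
  have hsum : ∀ (a b : Y → ℝ) (t : ℝ),
      ∑ y, ((∑ z, Real.exp (a z)) ^ t * (∑ z, Real.exp (b z)) ^ (1 - t) *
        (t * (Real.exp (a y) / ∑ z, Real.exp (a z)) +
         (1 - t) * (Real.exp (b y) / ∑ z, Real.exp (b z)))) =
      (∑ z, Real.exp (a z)) ^ t * (∑ z, Real.exp (b z)) ^ (1 - t) := by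
    intro a b t
    rw [← Finset.mul_sum]
    have h1 : ∑ y, (t * (Real.exp (a y) / ∑ z, Real.exp (a z)) +
        (1 - t) * (Real.exp (b y) / ∑ z, Real.exp (b z))) = 1 := by
      rw [Finset.sum_add_distrib, ← Finset.mul_sum, ← Finset.mul_sum,
        ← Finset.sum_div, ← Finset.sum_div, div_self (hSpos a).ne', div_self (hSpos b).ne']
      ring
    rw [h1, mul_one]
  have hexp : ∀ (a b : Y → ℝ) (t : ℝ) (y : Y),
      Real.exp (t * a y + (1 - t) * b y) = Real.exp (a y) ^ t * Real.exp (b y) ^ (1 - t) := by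
    intro a b t y
    rw [Real.rpow_def_of_pos (Real.exp_pos _), Real.rpow_def_of_pos (Real.exp_pos _),
      Real.log_exp, Real.log_exp, ← Real.exp_add]
    ring_nf
  have hlogAB : ∀ (a b : Y → ℝ) (t : ℝ),
      Real.log ((∑ z, Real.exp (a z)) ^ t * (∑ z, Real.exp (b z)) ^ (1 - t)) =
      t * Real.log (∑ z, Real.exp (a z)) + (1 - t) * Real.log (∑ z, Real.exp (b z)) := by
    intro a b t
    rw [Real.log_mul (Real.rpow_pos_of_pos (hSpos a) _).ne' (Real.rpow_pos_of_pos (hSpos b) _).ne',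
      Real.log_rpow (hSpos a), Real.log_rpow (hSpos b)]
  constructor
  · refine ⟨convex_univ, fun a _ b _ s u hs hu hsu => ?_⟩
    have hu' : u = 1 - s := by linarith
    subst hu'
    rw [hLSE, hLSE, hLSE]
    have hle : ∑ y, Real.exp ((s • a + (1 - s) • b) y) ≤
        (∑ z, Real.exp (a z)) ^ s * (∑ z, Real.exp (b z)) ^ (1 - s) := by
      rw [← hsum a b s]
      apply Finset.sum_le_sum
      intro y _
      have : (s • a + (1 - s) • b) y = s * a y + (1 - s) * b y := by
        simp [smul_eq_mul]
      rw [this, hexp]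
      exact lse_pointwise (hSpos a) (hSpos b) (Real.exp_pos _) (Real.exp_pos _) hs
        (by linarith)
    calc Real.log (∑ y, Real.exp ((s • a + (1 - s) • b) y))
        ≤ Real.log ((∑ z, Real.exp (a z)) ^ s * (∑ z, Real.exp (b z)) ^ (1 - s)) :=
          Real.log_le_log (hSpos _) hle
      _ = s * Real.log (∑ z, Real.exp (a z)) + (1 - s) * Real.log (∑ z, Real.exp (b z)) :=
          hlogAB a b s
  · intro a b hnc t ⟨ht0, ht1⟩
    -- find a point where the ratio differs
    have hy : ∃ y : Y, Real.exp (a y) / (∑ z, Real.exp (a z)) ≠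
        Real.exp (b y) / (∑ z, Real.exp (b z)) := by
      by_contra h
      push_neg at h
      apply hnc
      refine ⟨Real.log ((∑ z, Real.exp (a z)) / (∑ z, Real.exp (b z))), fun y => ?_⟩
      have h' := h y
      have : Real.exp (a y) = Real.exp (b y) * ((∑ z, Real.exp (a z)) / (∑ z, Real.exp (b z))) := by
        field_simp at h' ⊢
        linarith [h']
      have := congrArg Real.log this
      rw [Real.log_exp, Real.log_mul (Real.exp_pos _).ne'
        (div_pos (hSpos a) (hSpos b)).ne', Real.log_exp] at this
      linarith
    obtain ⟨y₀, hy₀⟩ := hy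
    rw [hLSE, hLSE, hLSE]
    have hlt : ∑ y, Real.exp ((t • a + (1 - t) • b) y) <
        (∑ z, Real.exp (a z)) ^ t * (∑ z, Real.exp (b z)) ^ (1 - t) := by
      rw [← hsum a b t]
      apply Finset.sum_lt_sum
      · intro y _
        have : (t • a + (1 - t) • b) y = t * a y + (1 - t) * b y := by simp [smul_eq_mul]
        rw [this, hexp]
        exact lse_pointwise (hSpos a) (hSpos b) (Real.exp_pos _) (Real.exp_pos _) ht0.le ht1.le
      · refine ⟨y₀, Finset.mem_univ _, ?_⟩
        have : (t • a + (1 - t) • b) y₀ = t * a y₀ + (1 - t) * b y₀ := by simp [smul_eq_mul]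
        rw [this, hexp]
        exact lse_pointwise_strict (hSpos a) (hSpos b) (Real.exp_pos _) (Real.exp_pos _)
          ht0 ht1 hy₀
    calc Real.log (∑ y, Real.exp ((t • a + (1 - t) • b) y))
        < Real.log ((∑ z, Real.exp (a z)) ^ t * (∑ z, Real.exp (b z)) ^ (1 - t)) :=
          Real.log_lt_log (hSpos _) hlt
      _ = t * Real.log (∑ z, Real.exp (a z)) + (1 - t) * Real.log (∑ z, Real.exp (b z)) :=
          hlogAB a b t
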